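/- If A is a c.e. set and we take V_1 = A and V_{i+1} = A_{i+1}^{V_i} (the Dekker-style subset construction) for noncomputable c.e. sets A_1 = A, A_2, ..., A_k, obtaining a chain U = V_k ⊆ ... ⊆ V_1 = V of infinite c.e. sets, then: (1) V_i ≤_T A_i for each i, and (2) for any set X with U ⊆ X ⊆ V, if i is the least index with V_i ⊆* X, then A_i ≤_T X. -/

import Mathlib

open Classical in
/-- Characteristic function of a set of naturals. -/
noncomputable def chi (A : Set ℕ) : ℕ → ℕ := fun n => if n ∈ A then 1 else 0

/-- Partial functions computable relative to an oracle `O : ℕ → ℕ`. -/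
inductive RecursiveInFn (O : ℕ → ℕ) : (ℕ →. ℕ) → Prop
  | zero : RecursiveInFn O (pure 0)
  | succ : RecursiveInFn O Nat.succ
  | left : RecursiveInFn O ↑fun n : ℕ => n.unpair.1
  | right : RecursiveInFn O ↑fun n : ℕ => n.unpair.2
  | oracle : RecursiveInFn O ↑O
  | pair {f g} : RecursiveInFn O f → RecursiveInFn O g →
      RecursiveInFn O fun n => Nat.pair <$> f n <*> g n
  | comp {f g} : RecursiveInFn O f → RecursiveInFn O g →
      RecursiveInFn O fun n => g n >>= f
  | prec {f g} : RecursiveInFn O f → RecursiveInFn O g →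
      RecursiveInFn O (Nat.unpaired fun a n =>
        n.rec (f a) fun y IH => do let i ← IH; g (Nat.pair a (Nat.pair y i)))
  | rfind {f} : RecursiveInFn O f →
      RecursiveInFn O fun a => Nat.rfind fun n => (fun m => m = 0) <$> f (Nat.pair a n)

/-- Turing reducibility between sets of naturals: `A ≤_T B`. -/
def SetTuringRed (A B : Set ℕ) : Prop := RecursiveInFn (chi B) ↑(chi A)

/-- `A` is computably enumerable. -/
def CE (A : Set ℕ) : Prop := ∃ f : ℕ →. ℕ, Nat.Partrec f ∧ ∀ n, n ∈ A ↔ (f n).Dom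

/-- `A` is c.e. relative to the oracle `O`. -/
def CEIn (O : ℕ → ℕ) (A : Set ℕ) : Prop :=
  ∃ f : ℕ →. ℕ, RecursiveInFn O f ∧ ∀ n, n ∈ A ↔ (f n).Dom

/-- A uniformly c.e. sequence of sets. -/
def UnifCE (A : ℕ → Set ℕ) : Prop :=
  ∃ f : ℕ →. ℕ, Nat.Partrec f ∧ ∀ i x, x ∈ A i ↔ (f (Nat.pair i x)).Dom

/-- The Dekker-style subset `A^W` built from enumerations `a` of `A` and `w` of `W`. -/
def DekkerOp (a w : ℕ → ℕ) : Set ℕ := {n | ∃ s, n = w s ∧ ∃ t > s, a t < w s}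

/-!
Everything reduces to the single step `A^W` with `A = rng a`, `W = rng w`.

To decide `n ∈ A^W` from `A`, read off `A ∩ [0, n)` and wait for a stage `T` by which all of it
has been enumerated; as `a` is injective, no `t ≥ T` has `a t < n`, so membership of `n` is
decided by the stages below `T`.

If `A^W ⊆* X` while `W \ X` is infinite, then `X` decides `A`: for `n`, search for a large `s`
with `n < w s ∉ X`. Then `w s ∉ A^W`, so nothing below `w s`, in particular `n`, enters `A` after
stage `s`.

For the least `i > 1` with `V_i ⊆* X`, minimality makes `V_{i-1} \ X` infinite, so this applies
to `V_i = A_i^{V_{i-1}}`; for `i = 1`, `X ⊆ V_1 = A_1` is a finite variant of `A_1`.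
-/

open Encodable Function Set

section ComputablePred

variable {α σ : Type*} [Primcodable α] [Primcodable σ]

theorem Computable.ite {p : α → Prop} [DecidablePred p] (hp : ComputablePred p) {f g : α → σ}
    (hf : Computable f) (hg : Computable g) : Computable fun a => if p a then f a else g a := by
  simpa only [Bool.cond_decide] using hp.decide.cond hf hg

theorem Computable.unpair_fst : Computable fun n : ℕ => n.unpair.1 :=
  Computable.fst.comp Computable.unpair

theorem Computable.unpair_snd : Computable fun n : ℕ => n.unpair.2 :=
  Computable.snd.comp Computable.unpair

theorem Computable.decode_list_getD :
    Computable fun c : ℕ => (decode (α := List ℕ) c).getD [] :=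
  Computable.option_getD Computable.decode (Computable.const [])

namespace ComputablePred

theorem nat_eq {f g : α → ℕ} (hf : Computable f) (hg : Computable g) :
    ComputablePred fun a => f a = g a :=
  (Primrec.eq.decide.to_comp.comp hf hg).computablePred

theorem nat_lt {f g : α → ℕ} (hf : Computable f) (hg : Computable g) :
    ComputablePred fun a => f a < g a :=
  (Primrec.nat_lt.decide.to_comp.comp hf hg).computablePred

theorem nat_le {f g : α → ℕ} (hf : Computable f) (hg : Computable g) :
    ComputablePred fun a => f a ≤ g a :=
  (Primrec.nat_le.decide.to_comp.comp hf hg).computablePred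

protected theorem and {p q : α → Prop} (hp : ComputablePred p) (hq : ComputablePred q) :
    ComputablePred fun a => p a ∧ q a := by
  classical
  exact computablePred_iff_computable_decide.2 <|
    (Primrec.and.to_comp.comp hp.decide hq.decide).of_eq fun a => by simp

protected theorem imp {p q : α → Prop} (hp : ComputablePred p) (hq : ComputablePred q) :
    ComputablePred fun a => p a → q a := by
  classical
  exact computablePred_iff_computable_decide.2 <|
    (Primrec.or.to_comp.comp hp.not.decide hq.decide).of_eq fun a => by simp [imp_iff_not_or]

theorem exists_lt {p : α → ℕ → Prop} {b : α → ℕ} (hb : Computable b)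
    (hp : ComputablePred fun x : α × ℕ => p x.1 x.2) :
    ComputablePred fun a => ∃ t < b a, p a t := by
  classical
  have hrec : ∀ a n, Nat.rec (motive := fun _ => Bool) false
      (fun t acc => acc || decide (p a t)) n = decide (∃ t < n, p a t) := by
    intro a n
    induction n with
    | zero => simp
    | succ n ih =>
      have hsucc : (∃ t < n + 1, p a t) ↔ (∃ t < n, p a t) ∨ p a n := by
        simp only [Nat.lt_succ_iff_lt_or_eq, or_and_right, exists_or, exists_eq_left]
      simp only [ih, ← Bool.decide_or, decide_eq_decide]
      exact hsucc.symm
  refine computablePred_iff_computable_decide.2 <| (Computable.nat_rec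
    (h := fun a (x : ℕ × Bool) => x.2 || decide (p a x.1)) hb (Computable.const false) ?_).of_eq
      fun a => hrec a (b a)
  exact (Primrec.or.to_comp.comp (Computable.snd.comp Computable.snd)
    (hp.decide.comp (Computable.fst.pair (Computable.fst.comp Computable.snd)))).to₂

theorem forall_lt {p : α → ℕ → Prop} {b : α → ℕ} (hb : Computable b)
    (hp : ComputablePred fun x : α × ℕ => p x.1 x.2) :
    ComputablePred fun a => ∀ t < b a, p a t :=
  (exists_lt (p := fun a t => ¬p a t) hb hp.not).not.of_eq fun a => by simp

end ComputablePred

theorem Set.Finite.computablePred {s : Set ℕ} (hs : s.Finite) {f : α → ℕ} (hf : Computable f) :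
    ComputablePred fun a => f a ∈ s :=
  ((PrimrecRel.exists_mem_list Primrec.eq).decide.to_comp.comp
    (Computable.const hs.toFinset.toList) hf).computablePred.of_eq fun a => by simp

end ComputablePred

theorem chi_eq_one_iff {A : Set ℕ} {n : ℕ} : chi A n = 1 ↔ n ∈ A := by
  by_cases h : n ∈ A <;> simp [chi, h]

theorem RecursiveInFn.of_partrec {O : ℕ → ℕ} {f : ℕ →. ℕ} (hf : Nat.Partrec f) :
    RecursiveInFn O f := by
  induction hf with
  | zero => exact .zero
  | succ => exact .succ
  | left => exact .left
  | right => exact .right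
  | pair _ _ ihf ihg => exact .pair ihf ihg
  | comp _ _ ihf ihg => exact .comp ihf ihg
  | prec _ _ ihf ihg => exact .prec ihf ihg
  | rfind _ ihf => exact .rfind ihf

-- `SetTuringRed A B` is `ComputableInFn (chi B) (chi A)` by definition.
def ComputableInFn (O : ℕ → ℕ) (f : ℕ → ℕ) : Prop := RecursiveInFn O ↑f

def oracleSegment (O : ℕ → ℕ) (n : ℕ) : List ℕ := (List.range n).map O

theorem oracleSegment_getD {O : ℕ → ℕ} {n x : ℕ} (hx : x < n) :
    (oracleSegment O n).getD x 0 = O x := by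
  simp [oracleSegment, hx]

namespace ComputableInFn

variable {O : ℕ → ℕ}

theorem of_eq {f g : ℕ → ℕ} (hf : ComputableInFn O f) (H : ∀ n, f n = g n) :
    ComputableInFn O g :=
  funext H ▸ hf

theorem of_computable {f : ℕ → ℕ} (hf : Computable f) : ComputableInFn O f :=
  RecursiveInFn.of_partrec (Partrec.nat_iff.1 hf)

theorem oracle : ComputableInFn O O := RecursiveInFn.oracle

theorem comp {f g : ℕ → ℕ} (hf : ComputableInFn O f) (hg : ComputableInFn O g) :
    ComputableInFn O fun n => f (g n) := by
  have h : (fun n => (g : ℕ →. ℕ) n >>= (f : ℕ →. ℕ)) = ((fun n => f (g n) : ℕ → ℕ) : ℕ →. ℕ) :=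
    funext fun n => Part.bind_some _ _
  exact show RecursiveInFn O _ from h ▸ RecursiveInFn.comp hf hg

theorem pair {f g : ℕ → ℕ} (hf : ComputableInFn O f) (hg : ComputableInFn O g) :
    ComputableInFn O fun n => Nat.pair (f n) (g n) := by
  have h : (fun n => Nat.pair <$> (f : ℕ →. ℕ) n <*> (g : ℕ →. ℕ) n) =
      ((fun n => Nat.pair (f n) (g n) : ℕ → ℕ) : ℕ →. ℕ) := funext fun n => by simp [Seq.seq]
  exact show RecursiveInFn O _ from h ▸ RecursiveInFn.pair hf hg

theorem comp₂ {F : ℕ → ℕ → ℕ} {g : ℕ → ℕ} (hF : Computable₂ F) (hg : ComputableInFn O g) :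
    ComputableInFn O fun n => F n (g n) :=
  ((of_computable (hF.comp Computable.unpair_fst Computable.unpair_snd)).comp
    ((of_computable Computable.id).pair hg)).of_eq fun n => by simp

theorem query {F : ℕ → ℕ → ℕ} {g : ℕ → ℕ} (hF : Computable₂ F) (hg : Computable g) :
    ComputableInFn O fun n => F n (O (g n)) :=
  comp₂ hF (oracle.comp (of_computable hg))

theorem natRec {f g : ℕ → ℕ} (hf : ComputableInFn O f) (hg : ComputableInFn O g) :
    ComputableInFn O fun p => Nat.rec (motive := fun _ => ℕ) (f p.unpair.1)
      (fun y i => g (Nat.pair p.unpair.1 (Nat.pair y i))) p.unpair.2 := by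
  have h : (Nat.unpaired fun a n => n.rec ((f : ℕ →. ℕ) a) fun y IH => do
        let i ← IH; (g : ℕ →. ℕ) (Nat.pair a (Nat.pair y i))) =
      ((fun p => Nat.rec (motive := fun _ => ℕ) (f p.unpair.1)
        (fun y i => g (Nat.pair p.unpair.1 (Nat.pair y i))) p.unpair.2 : ℕ → ℕ) : ℕ →. ℕ) := by
    funext p
    simp only [Nat.unpaired, PFun.coe_val]
    induction p.unpair.2 with
    | zero => rfl
    | succ n ih =>
      show (Nat.rec _ _ n : Part ℕ) >>= _ = _
      rw [ih]
      simp
  exact show RecursiveInFn O _ from h ▸ RecursiveInFn.prec hf hg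

theorem find {R : ℕ → ℕ → Prop} [DecidableRel R]
    (hR : ComputableInFn O fun p => if R p.unpair.1 p.unpair.2 then 0 else 1)
    (H : ∀ n, ∃ s, R n s) : ComputableInFn O fun n => Nat.find (H n) := by
  have h : (fun n => Nat.rfind fun s => (fun m => m = 0) <$>
        ((fun p => if R p.unpair.1 p.unpair.2 then 0 else 1 : ℕ → ℕ) : ℕ →. ℕ) (Nat.pair n s)) =
      ((fun n => Nat.find (H n) : ℕ → ℕ) : ℕ →. ℕ) := by
    funext n
    refine Part.eq_some_iff.2 (Nat.mem_rfind.2 ⟨?_, fun hm => ?_⟩)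
    · simp [Nat.find_spec (H n)]
    · simp [Nat.find_min (H n) hm]
  exact show RecursiveInFn O _ from h ▸ RecursiveInFn.rfind hR

-- The recursion carries the code of the segment built so far and appends one oracle value.
theorem segment : ComputableInFn O fun n => encode (oracleSegment O n) := by
  have hstep : ComputableInFn O fun q =>
      encode ((decode (α := List ℕ) q.unpair.2.unpair.2).getD [] ++
        [O q.unpair.2.unpair.1]) := by
    refine query (F := fun q y => encode
      ((decode (α := List ℕ) q.unpair.2.unpair.2).getD [] ++ [y])) ?_ ?_
    · exact (Computable.encode.comp (Computable.list_concat.comp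
        (Computable.decode_list_getD.comp
          (Computable.unpair_snd.comp (Computable.unpair_snd.comp Computable.fst)))
        Computable.snd)).to₂
    · exact Computable.unpair_fst.comp Computable.unpair_snd
  refine ((natRec (of_computable (Computable.const (encode ([] : List ℕ)))) hstep).comp
    (of_computable (f := fun n => Nat.pair 0 n) ?_)).of_eq fun n => ?_
  · exact Primrec₂.natPair.to_comp.comp (Computable.const 0) Computable.id
  simp only [Nat.unpair_pair]
  induction n with
  | zero => rfl
  | succ n ih =>
    change encode ((decode (α := List ℕ) (Nat.rec _ _ n)).getD [] ++ [O n]) = _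
    rw [ih]
    simp [oracleSegment, List.range_succ]

theorem of_segment {F : ℕ → List ℕ → ℕ} {m : ℕ → ℕ} (hF : Computable₂ F) (hm : Computable m) :
    ComputableInFn O fun n => F n (oracleSegment O (m n)) :=
  (comp₂ (F := fun n c => F n ((decode c).getD []))
    (hF.comp Computable.fst (Computable.decode_list_getD.comp Computable.snd)).to₂
    (segment.comp (of_computable hm))).of_eq fun n => by simp

end ComputableInFn

section Dekker

variable {a w : ℕ → ℕ}

def EnumeratedBelow (a : ℕ → ℕ) (n T : ℕ) : Prop := ∀ x < n, x ∈ range a → ∃ t < T, a t = x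

theorem exists_enumeratedBelow (a : ℕ → ℕ) (n : ℕ) : ∃ T, EnumeratedBelow a n T := by
  have h : ∀ᶠ T in Filter.atTop, ∀ x ∈ {x | x < n}, x ∈ range a → ∃ t < T, a t = x := by
    refine (Set.finite_lt_nat n).eventually_all.2 fun x _ => ?_
    rcases em (x ∈ range a) with ⟨t, rfl⟩ | hx
    · exact (Filter.eventually_gt_atTop t).mono fun T hT _ => ⟨t, hT, rfl⟩
    · exact Filter.Eventually.of_forall fun T h => absurd h hx
  exact h.exists

theorem mem_dekkerOp_iff_of_enumeratedBelow (hai : Injective a) {n T : ℕ}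
    (hT : EnumeratedBelow a n T) : n ∈ DekkerOp a w ↔ ∃ t < T, a t < n ∧ ∃ s < t, w s = n := by
  constructor
  · rintro ⟨s, rfl, t, hst, hat⟩
    obtain ⟨t', ht', heq⟩ := hT _ hat ⟨t, rfl⟩
    obtain rfl := hai heq
    exact ⟨t', ht', hat, s, hst, rfl⟩
  · rintro ⟨t, -, hat, s, hst, rfl⟩
    exact ⟨s, rfl, t, hst, hat⟩

theorem setTuringRed_dekkerOp (hac : Computable a) (hai : Injective a) (hwc : Computable w) :
    SetTuringRed (DekkerOp a w) (range a) := by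
  classical
  have hsearch : ComputableInFn (chi (range a)) fun p =>
      if EnumeratedBelow a p.unpair.1 p.unpair.2 then 0 else 1 := by
    refine (ComputableInFn.of_segment (m := fun p => p.unpair.1) (F := fun p L =>
      if ∀ x < p.unpair.1, L.getD x 0 = 1 → ∃ t < p.unpair.2, a t = x then 0 else 1) ?_
        Computable.unpair_fst).of_eq fun p => ?_
    · have hP : ComputablePred fun x : ℕ × List ℕ =>
          ∀ y < x.1.unpair.1, x.2.getD y 0 = 1 → ∃ t < x.1.unpair.2, a t = y :=
        ComputablePred.forall_lt
          (p := fun (x : ℕ × List ℕ) y => x.2.getD y 0 = 1 → ∃ t < x.1.unpair.2, a t = y)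
          (Computable.unpair_fst.comp Computable.fst) <|
        ComputablePred.imp (ComputablePred.nat_eq ((Primrec.list_getD 0).to_comp.comp
          (Computable.snd.comp Computable.fst) Computable.snd) (Computable.const 1)) <|
        ComputablePred.exists_lt (p := fun (x : (ℕ × List ℕ) × ℕ) t => a t = x.2)
          (Computable.unpair_snd.comp (Computable.fst.comp Computable.fst))
          (ComputablePred.nat_eq (hac.comp Computable.snd) (Computable.snd.comp Computable.fst))
      exact (Computable.ite hP (Computable.const 0) (Computable.const 1)).to₂
    · refine if_congr (forall₂_congr fun x hx => ?_) rfl rfl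
      rw [oracleSegment_getD hx, chi_eq_one_iff]
  have hT := hsearch.find (exists_enumeratedBelow a)
  refine (ComputableInFn.comp₂
    (F := fun n T => if ∃ t < T, a t < n ∧ ∃ s < t, w s = n then 1 else 0) ?_ hT).of_eq fun n => ?_
  · have hP : ComputablePred fun x : ℕ × ℕ => ∃ t < x.2, a t < x.1 ∧ ∃ s < t, w s = x.1 :=
      ComputablePred.exists_lt (p := fun (x : ℕ × ℕ) t => a t < x.1 ∧ ∃ s < t, w s = x.1)
        Computable.snd <|
      ComputablePred.and
        (ComputablePred.nat_lt (hac.comp Computable.snd) (Computable.fst.comp Computable.fst)) <|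
      ComputablePred.exists_lt (p := fun (x : (ℕ × ℕ) × ℕ) s => w s = x.1.1) Computable.snd <|
      ComputablePred.nat_eq (hwc.comp Computable.snd)
        (Computable.fst.comp (Computable.fst.comp Computable.fst))
    exact (Computable.ite hP (Computable.const 1) (Computable.const 0)).to₂
  · simp only [chi,
      mem_dekkerOp_iff_of_enumeratedBelow hai (Nat.find_spec (exists_enumeratedBelow a n))]

theorem mem_range_iff_of_notMem_dekkerOp {s n : ℕ} (hs : w s ∉ DekkerOp a w) (hn : n < w s) :
    n ∈ range a ↔ ∃ t < s + 1, a t = n := by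
  constructor
  · rintro ⟨t, rfl⟩
    refine ⟨t, ?_, rfl⟩
    by_contra hts
    exact hs ⟨s, rfl, t, by omega, hn⟩
  · rintro ⟨t, -, rfl⟩
    exact ⟨t, rfl⟩

theorem exists_search_bound_of_dekkerOp_diff_finite (hwi : Injective w) {X : Set ℕ}
    (hfin : (DekkerOp a w \ X).Finite) (hinf : (range w \ X).Infinite) :
    ∃ b, (∀ s ≥ b, w s ∉ DekkerOp a w \ X) ∧ ∀ n, ∃ s, b ≤ s ∧ n < w s ∧ w s ∉ X := by
  obtain ⟨b, hb⟩ : ∃ b, ∀ s ≥ b, w s ∉ DekkerOp a w \ X := Filter.eventually_atTop.1 <| by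
    simpa only [Nat.cofinite_eq_atTop] using
      hwi.tendsto_cofinite.eventually hfin.eventually_cofinite_notMem
  have hfreq : ∃ᶠ s in Filter.atTop, w s ∉ X := by
    refine Nat.frequently_atTop_iff_infinite.2 ((hinf.mono ?_).of_image w)
    rintro _ ⟨⟨s, rfl⟩, hs⟩
    exact ⟨s, hs, rfl⟩
  refine ⟨b, hb, fun n => ?_⟩
  exact ((hfreq.and_eventually ((Filter.eventually_ge_atTop b).and
    (hwi.nat_tendsto_atTop.eventually_gt_atTop n))).exists).imp fun _ ⟨hX, hb, hn⟩ => ⟨hb, hn, hX⟩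

theorem setTuringRed_of_dekkerOp_diff_finite (hac : Computable a) (hwc : Computable w)
    (hwi : Injective w) {X : Set ℕ} (hfin : (DekkerOp a w \ X).Finite)
    (hinf : (range w \ X).Infinite) : SetTuringRed (range a) X := by
  classical
  obtain ⟨b, hb, hR⟩ := exists_search_bound_of_dekkerOp_diff_finite hwi hfin hinf
  have hsearch : ComputableInFn (chi X) fun p =>
      if b ≤ p.unpair.2 ∧ p.unpair.1 < w p.unpair.2 ∧ w p.unpair.2 ∉ X then 0 else 1 := by
    have hs₁ : Computable fun x : ℕ × ℕ => x.1.unpair.2 := Computable.unpair_snd.comp Computable.fst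
    refine (ComputableInFn.query (F := fun p y =>
      if b ≤ p.unpair.2 ∧ p.unpair.1 < w p.unpair.2 ∧ y = 0 then 0 else 1) ?_
        (hwc.comp Computable.unpair_snd)).of_eq fun p => ?_
    · have hP : ComputablePred fun x : ℕ × ℕ =>
          b ≤ x.1.unpair.2 ∧ x.1.unpair.1 < w x.1.unpair.2 ∧ x.2 = 0 :=
        ComputablePred.and (ComputablePred.nat_le (Computable.const b) hs₁) <|
        ComputablePred.and (ComputablePred.nat_lt (Computable.unpair_fst.comp Computable.fst)
          (hwc.comp hs₁)) (ComputablePred.nat_eq Computable.snd (Computable.const 0))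
      exact (Computable.ite hP (Computable.const 0) (Computable.const 1)).to₂
    · simp [chi]
  refine (ComputableInFn.comp₂ (F := fun n s => if ∃ t < s + 1, a t = n then 1 else 0) ?_
    (hsearch.find hR)).of_eq fun n => ?_
  · have hP : ComputablePred fun x : ℕ × ℕ => ∃ t < x.2 + 1, a t = x.1 :=
      ComputablePred.exists_lt (p := fun (x : ℕ × ℕ) t => a t = x.1)
        (Primrec.succ.to_comp.comp Computable.snd)
        (ComputablePred.nat_eq (hac.comp Computable.snd) (Computable.fst.comp Computable.fst))
    exact (Computable.ite hP (Computable.const 1) (Computable.const 0)).to₂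
  · obtain ⟨hbs, hn, hX⟩ := Nat.find_spec (hR n)
    simp only [chi, mem_range_iff_of_notMem_dekkerOp (fun hD => hb _ hbs ⟨hD, hX⟩) hn]

theorem setTuringRed_of_diff_finite {A X : Set ℕ} (hXA : X ⊆ A) (hfin : (A \ X).Finite) :
    SetTuringRed A X := by
  classical
  refine (ComputableInFn.query (F := fun n y => if n ∈ A \ X then 1 else y) ?_
    Computable.id).of_eq fun n => ?_
  · exact (Computable.ite (hfin.computablePred Computable.fst) (Computable.const 1)
      Computable.snd).to₂
  · by_cases hX : n ∈ X
    · simp [chi, hX, hXA hX]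
    · by_cases hA : n ∈ A <;> simp [chi, hX, hA]

end Dekker

theorem stmt15_general (k : ℕ) (a v : ℕ → ℕ → ℕ)
    (hac : ∀ i, 1 ≤ i → i ≤ k → Computable (a i))
    (hai : ∀ i, 1 ≤ i → i ≤ k → Function.Injective (a i))
    (hvc : ∀ i, 1 ≤ i → i ≤ k → Computable (v i))
    (hvi : ∀ i, 1 ≤ i → i ≤ k → Function.Injective (v i))
    (hv1 : Set.range (v 1) = Set.range (a 1))
    (hstep : ∀ i, 1 ≤ i → i < k →
      Set.range (v (i + 1)) = DekkerOp (a (i + 1)) (v i)) :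
    (∀ i, 1 ≤ i → i ≤ k → SetTuringRed (Set.range (v i)) (Set.range (a i))) ∧
    (∀ X : Set ℕ, Set.range (v k) ⊆ X → X ⊆ Set.range (v 1) →
      ∀ i, 1 ≤ i → i ≤ k → (Set.range (v i) \ X).Finite →
        (∀ j, 1 ≤ j → j < i → ¬(Set.range (v j) \ X).Finite) →
        SetTuringRed (Set.range (a i)) X) := by
  constructor
  · intro i hi hik
    match i, hi with
    | 1, _ =>
      rw [hv1]
      exact ComputableInFn.oracle
    | j + 2, _ =>
      rw [hstep (j + 1) (by omega) (by omega)]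
      exact setTuringRed_dekkerOp (hac _ (by omega) hik) (hai _ (by omega) hik)
        (hvc _ (by omega) (by omega))
  · intro X _ hXV i hi hik hfin hmin
    match i, hi with
    | 1, _ =>
      rw [← hv1]
      exact setTuringRed_of_diff_finite hXV hfin
    | j + 2, _ =>
      rw [hstep (j + 1) (by omega) (by omega)] at hfin
      exact setTuringRed_of_dekkerOp_diff_finite (hac _ (by omega) hik)
        (hvc _ (by omega) (by omega)) (hvi _ (by omega) (by omega)) hfin
        (hmin (j + 1) (by omega) (by omega))

theorem stmt15 (k : ℕ) (hk : 1 ≤ k) (a v : ℕ → ℕ → ℕ)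
    (hac : ∀ i, 1 ≤ i → i ≤ k → Computable (a i))
    (hai : ∀ i, 1 ≤ i → i ≤ k → Function.Injective (a i))
    (hanc : ∀ i, 1 ≤ i → i ≤ k → ¬ComputablePred (· ∈ Set.range (a i)))
    (hvc : ∀ i, 1 ≤ i → i ≤ k → Computable (v i))
    (hvi : ∀ i, 1 ≤ i → i ≤ k → Function.Injective (v i))
    (hv1 : Set.range (v 1) = Set.range (a 1))
    (hstep : ∀ i, 1 ≤ i → i < k →
      Set.range (v (i + 1)) = DekkerOp (a (i + 1)) (v i)) :
    (∀ i, 1 ≤ i → i ≤ k → SetTuringRed (Set.range (v i)) (Set.range (a i))) ∧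
    (∀ X : Set ℕ, Set.range (v k) ⊆ X → X ⊆ Set.range (v 1) →
      ∀ i, 1 ≤ i → i ≤ k → (Set.range (v i) \ X).Finite →
        (∀ j, 1 ≤ j → j < i → ¬(Set.range (v j) \ X).Finite) →
        SetTuringRed (Set.range (a i)) X) :=
  stmt15_general k a v hac hai hvc hvi hv1 hstep
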